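/- The lower bound ⌈N/2⌉ is not tight: there exists a 2-by-4 topology (caterpillar S₁ tree with all quartets of type 1) for which no set of 2 quartet queries determines all four joining points, i.e., at least 3 queries are required. -/
import Mathlib


/-- Length (number of edges) of the root-to-leaf path of each receiver in the
2-by-4 caterpillar (tall binary) tree. -/
def pathLen : Fin 4 → ℕ := ![4, 4, 3, 2]

/-- `prefixLen i j` is the number of shared edges of the paths to receivers `i` and `j`
above their branching point `B_{i,j}`. -/
def prefixLen : Fin 4 → Fin 4 → ℕ :=
  ![![3, 3, 2, 1], ![3, 3, 2, 1], ![2, 2, 2, 1], ![1, 1, 1, 1]]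

/-- A placement `J` of joining points (each `J i` is the index, from the top, of an edge
on the path to receiver `i`) is consistent with a set `Q` of queried pairs, all of which
answered type 1: for each queried pair the two joining points coincide and lie strictly
above the branching point. -/
def ConsistentType1 (Q : Finset (Fin 4 × Fin 4)) (J : Fin 4 → ℕ) : Prop :=
  (∀ i : Fin 4, J i < pathLen i) ∧
  ∀ p ∈ Q, J p.1 = J p.2 ∧ J p.1 < prefixLen p.1 p.2

lemma key : ∀ p q : Fin 4 × Fin 4, p.1 ≠ p.2 → q.1 ≠ q.2 →
    ∃ J : Fin 4 → Fin 2, (∃ i, (J i : ℕ) ≠ 0) ∧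
      (∀ i, (J i : ℕ) < pathLen i) ∧
      (∀ r : Fin 4 × Fin 4, r = p ∨ r = q →
        (J r.1 : ℕ) = (J r.2 : ℕ) ∧ (J r.1 : ℕ) < prefixLen r.1 r.2) := by
  decide

/-- For the 2-by-4 caterpillar topology in which all quartets are of type 1, no set of at
most 2 quartet queries determines all four joining points: any 2 answers are consistent
with at least two distinct placements. Hence at least 3 queries are required, while the
universal lower bound is `⌈4/2⌉ = 2`. -/
theorem stmt_17 :
    (∀ Q : Finset (Fin 4 × Fin 4), (∀ p ∈ Q, p.1 ≠ p.2) → Q.card ≤ 2 →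
      ∃ J J' : Fin 4 → ℕ, J ≠ J' ∧ ConsistentType1 Q J ∧ ConsistentType1 Q J') ∧
    (4 + 1) / 2 = 2 := by
  constructor
  · intro Q hne hcard
    -- find p q with Q ⊆ {p, q} and both off-diagonal
    have hpq : ∃ p q : Fin 4 × Fin 4, p.1 ≠ p.2 ∧ q.1 ≠ q.2 ∧
        ∀ r ∈ Q, r = p ∨ r = q := by
      rcases Q.eq_empty_or_nonempty with h | ⟨p, hp⟩
      · exact ⟨(0, 1), (0, 1), by decide, by decide, by simp [h]⟩
      · rcases (Q.erase p).eq_empty_or_nonempty with h | ⟨q, hq⟩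
        · refine ⟨p, p, hne p hp, hne p hp, fun r hr => ?_⟩
          left
          by_contra hrp
          have : r ∈ Q.erase p := Finset.mem_erase.mpr ⟨hrp, hr⟩
          simp [h] at this
        · refine ⟨p, q, hne p hp, hne q (Finset.mem_of_mem_erase hq), fun r hr => ?_⟩
          by_contra hc
          push_neg at hc
          have h3 : ({p, q, r} : Finset (Fin 4 × Fin 4)) ⊆ Q := by
            intro x hx
            simp only [Finset.mem_insert, Finset.mem_singleton] at hx
            rcases hx with rfl | rfl | rfl
            · exact hp
            · exact Finset.mem_of_mem_erase hq
            · exact hr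
          have hqp : q ≠ p := (Finset.mem_erase.mp hq).1
          have : ({p, q, r} : Finset (Fin 4 × Fin 4)).card = 3 := by
            rw [Finset.card_insert_of_notMem, Finset.card_insert_of_notMem,
              Finset.card_singleton]
            · simp [Ne.symm hc.2]
            · simp [Ne.symm hqp, Ne.symm hc.1]
          have := Finset.card_le_card h3
          omega
    obtain ⟨p, q, hp, hq, hsub⟩ := hpq
    obtain ⟨J, ⟨i0, hi0⟩, hbd, hcons⟩ := key p q hp hq
    refine ⟨fun _ => 0, fun i => (J i : ℕ), ?_, ?_, ?_⟩
    · intro h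
      exact hi0 (congrFun h i0).symm
    · have hpos : ∀ i j : Fin 4, 0 < prefixLen i j := by decide
      have hpl : ∀ i : Fin 4, 0 < pathLen i := by decide
      exact ⟨fun i => hpl i, fun r _ => ⟨rfl, hpos r.1 r.2⟩⟩
    · exact ⟨hbd, fun r hr => hcons r (hsub r hr)⟩
  · rfl
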